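/- Probabilistic bisimulations are exactly ≡^δ-simulations between probabilistic multi-transition systems: let M₁ : Type u ⥤ Type u be the functor with object map X ↦ {M : Multiset (ℝ × X) // M is a probability multiset} and action induced by Multiset.map (fun q => (q.1, f q.2)) (which preserves the probability multiset condition), and let D : Type u ⥤ Type u be the functor with object map X ↦ {p : X → ℝ // p has finite support, 0 ≤ p x ≤ 1 for all x, and the sum of p over its support equals 1} and action the pushforward (D.map f p) y = ∑ of p x over the x in the support of p with f x = y. Let δ : M₁ ⟶ D be the natural transformation with components induced by D_M. Given D-coalgebras b₁ : X₁ → D.obj X₁, b₂ : X₂ → D.obj X₂ and any M₁-coalgebras a₁, a₂ with δ.app X₁ ∘ a₁ = b₁ and δ.app X₂ ∘ a₂ = b₂, a relation R : X₁ → X₂ → Prop is a D-bisimulation between b₁ and b₂ iff it is a ≡^δ-simulation between a₁ and a₂. -/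

import Mathlib

open CategoryTheory

universe u

/-- Relation lifting `Rel(F)(R)`. -/
def RelLift (F : Type u ⥤ Type u) {X Y : Type u} (R : X → Y → Prop)
    (u : F.obj X) (v : F.obj Y) : Prop :=
  ∃ w : F.obj {p : X × Y // R p.1 p.2},
    F.map (TypeCat.ofHom fun p => p.1.1) w = u ∧ F.map (TypeCat.ofHom fun p => p.1.2) w = v

/-- `R` is an `F`-bisimulation between coalgebras `c` and `d`. -/
def IsBisimulation (F : Type u ⥤ Type u) {X Y : Type u}
    (c : X → F.obj X) (d : Y → F.obj Y) (R : X → Y → Prop) : Prop :=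
  ∀ x y, R x y → RelLift F R (c x) (d y)

/-- Order-enriched relation lifting `Rel(F)_⊑(R)`. -/
def RelLiftOrd (F : Type u ⥤ Type u) (r : ∀ X : Type u, F.obj X → F.obj X → Prop)
    {X Y : Type u} (R : X → Y → Prop) (u : F.obj X) (v : F.obj Y) : Prop :=
  ∃ w : F.obj {p : X × Y // R p.1 p.2},
    r X u (F.map (TypeCat.ofHom fun p => p.1.1) w) ∧ r Y (F.map (TypeCat.ofHom fun p => p.1.2) w) v

/-- `R` is a `⊑`-simulation between coalgebras `c` and `d`. -/
def IsSimulation (F : Type u ⥤ Type u) (r : ∀ X : Type u, F.obj X → F.obj X → Prop)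
    {X Y : Type u} (c : X → F.obj X) (d : Y → F.obj Y) (R : X → Y → Prop) : Prop :=
  ∀ x y, R x y → RelLiftOrd F r R (c x) (d y)

/-- The kernel equivalence `≡^α` of a natural transformation `α : F ⟶ G`. -/
def kernelRel {F G : Type u ⥤ Type u} (α : F ⟶ G) (X : Type u) :
    F.obj X → F.obj X → Prop :=
  fun u u' => α.app X u = α.app X u'

/-- `r` is an order on the functor `F`: a functorial family of preorders. -/
def IsFunctorOrder (F : Type u ⥤ Type u)
    (r : ∀ X : Type u, F.obj X → F.obj X → Prop) : Prop :=
  (∀ (X : Type u) (u : F.obj X), r X u u) ∧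
  (∀ (X : Type u) (u v w : F.obj X), r X u v → r X v w → r X u w) ∧
  (∀ (X Y : Type u) (f : X → Y) (u u' : F.obj X), r X u u' → r Y (F.map (TypeCat.ofHom f) u) (F.map (TypeCat.ofHom f) u'))

open scoped Classical

/-- `M` is a probability multiset: all weights in `[0,1]` and total weight `1`. -/
def IsProbMultiset {X : Type u} (M : Multiset (ℝ × X)) : Prop :=
  (∀ q ∈ M, 0 ≤ q.1 ∧ q.1 ≤ 1) ∧ (M.map Prod.fst).sum = 1

/-- The discrete distribution `D_M(M)` induced by a multiset of weighted elements. -/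
noncomputable def DM {X : Type u} (M : Multiset (ℝ × X)) (x : X) : ℝ :=
  ((M.filter (fun q => q.2 = x)).map Prod.fst).sum

theorem isProbMultiset_map {X Y : Type u} (f : X → Y) (M : Multiset (ℝ × X))
    (h : IsProbMultiset M) :
    IsProbMultiset (M.map (fun q => (q.1, f q.2))) := by
  refine ⟨?_, ?_⟩
  · intro q hq
    obtain ⟨p, hp, rfl⟩ := Multiset.mem_map.mp hq
    exact h.1 p hp
  · rw [Multiset.map_map]
    exact h.2

/-- `p` is a finitely supported probability distribution. -/
def IsProbDist {X : Type u} (p : X →₀ ℝ) : Prop :=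
  (∀ x, 0 ≤ p x ∧ p x ≤ 1) ∧ ∑ x ∈ p.support, p x = 1

theorem isProbDist_mapDomain {X Y : Type u} (f : X → Y) (p : X →₀ ℝ)
    (h : IsProbDist p) : IsProbDist (Finsupp.mapDomain f p) := by
  obtain ⟨hbd, hsum⟩ := h
  have happ : ∀ y, Finsupp.mapDomain f p y = ∑ x ∈ p.support, if f x = y then p x else 0 := by
    intro y
    rw [Finsupp.mapDomain, Finsupp.sum_apply, Finsupp.sum]
    exact Finset.sum_congr rfl fun x _ => Finsupp.single_apply
  constructor
  · intro y
    rw [happ]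
    constructor
    · exact Finset.sum_nonneg fun x _ => by split <;> simp [(hbd x).1]
    · calc (∑ x ∈ p.support, if f x = y then p x else 0) ≤ ∑ x ∈ p.support, p x :=
            Finset.sum_le_sum fun x _ => by split <;> simp [(hbd x).1]
        _ = 1 := hsum
  · have key := Finsupp.sum_mapDomain_index (f := f) (s := p) (h := fun _ (m : ℝ) => m)
      (fun _ => rfl) (fun _ _ _ => rfl)
    simpa [Finsupp.sum] using key.trans (by simpa [Finsupp.sum] using hsum)

theorem DM_support_finite {X : Type u} (M : Multiset (ℝ × X)) :
    (Function.support (DM M)).Finite := by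
  apply Set.Finite.subset (M.map Prod.snd).toFinset.finite_toSet
  intro x hx
  simp only [Function.mem_support] at hx
  by_contra hmem
  apply hx
  have : M.filter (fun q => q.2 = x) = 0 := by
    rw [Multiset.filter_eq_nil]
    intro q hq hq2
    exact hmem (by simp [Multiset.mem_toFinset]; exact ⟨q.1, by rw [← hq2]; simpa using hq⟩)
  simp [DM, this]

/-- `D_M(M)` as a finitely supported function. -/
noncomputable def DMfinsupp {X : Type u} (M : Multiset (ℝ × X)) : X →₀ ℝ :=
  Finsupp.ofSupportFinite (DM M) (DM_support_finite M)

theorem DM_cons {X : Type u} (q : ℝ × X) (M : Multiset (ℝ × X)) (x : X) :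
    DM (q ::ₘ M) x = (if q.2 = x then q.1 else 0) + DM M x := by
  simp only [DM, Multiset.filter_cons]
  split <;> simp

theorem DMfinsupp_cons {X : Type u} (q : ℝ × X) (M : Multiset (ℝ × X)) :
    DMfinsupp (q ::ₘ M) = Finsupp.single q.2 q.1 + DMfinsupp M := by
  apply Finsupp.ext
  intro x
  show DM (q ::ₘ M) x = Finsupp.single q.2 q.1 x + DM M x
  rw [DM_cons, Finsupp.single_apply]

theorem DMfinsupp_zero {X : Type u} : DMfinsupp (0 : Multiset (ℝ × X)) = 0 := by
  apply Finsupp.ext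
  intro x
  show DM (0 : Multiset (ℝ × X)) x = 0
  simp [DM]

theorem DMfinsupp_natural {X Y : Type u} (f : X → Y) (M : Multiset (ℝ × X)) :
    Finsupp.mapDomain f (DMfinsupp M) = DMfinsupp (M.map (fun q => (q.1, f q.2))) := by
  induction M using Multiset.induction_on with
  | empty => simp [DMfinsupp_zero]
  | cons q M ih =>
    rw [Multiset.map_cons, DMfinsupp_cons, DMfinsupp_cons, Finsupp.mapDomain_add,
      Finsupp.mapDomain_single, ih]

theorem sum_DM {X : Type u} (M : Multiset (ℝ × X)) (S : Finset X)
    (hS : ∀ q ∈ M, q.2 ∈ S) :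
    ∑ x ∈ S, DM M x = (M.map Prod.fst).sum := by
  induction M using Multiset.induction_on with
  | empty => simp [DM]
  | cons q M ih =>
    have hq : q.2 ∈ S := hS q (Multiset.mem_cons_self q M)
    have hM : ∀ q' ∈ M, q'.2 ∈ S := fun q' h' => hS q' (Multiset.mem_cons_of_mem h')
    have hDM : ∀ x, DM (q ::ₘ M) x = (if q.2 = x then q.1 else 0) + DM M x := by
      intro x
      simp only [DM, Multiset.filter_cons]
      split <;> simp
    simp only [hDM]
    rw [Finset.sum_add_distrib, ih hM, Finset.sum_ite_eq]
    simp [hq]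

theorem isProbDist_DMfinsupp {X : Type u} (M : Multiset (ℝ × X))
    (h : IsProbMultiset M) : IsProbDist (DMfinsupp M) := by
  have hco : ∀ x, DMfinsupp M x = DM M x := fun x => rfl
  have hnn : ∀ x, 0 ≤ DM M x := by
    intro x
    apply Multiset.sum_nonneg
    intro a ha
    obtain ⟨q, hq, rfl⟩ := Multiset.mem_map.mp ha
    exact (h.1 q (Multiset.mem_of_mem_filter hq)).1
  have hle : ∀ x, DM M x ≤ 1 := by
    intro x
    have hnn' : 0 ≤ ((M.filter (fun q => ¬ q.2 = x)).map Prod.fst).sum := by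
      apply Multiset.sum_nonneg
      intro a ha
      obtain ⟨q, hq, rfl⟩ := Multiset.mem_map.mp ha
      exact (h.1 q (Multiset.mem_of_mem_filter hq)).1
    have hsplit : DM M x + ((M.filter (fun q => ¬ q.2 = x)).map Prod.fst).sum
        = (M.map Prod.fst).sum := by
      conv_rhs => rw [← Multiset.filter_add_not (fun q => q.2 = x) M]
      rw [Multiset.map_add, Multiset.sum_add]
      rfl
    have := h.2
    linarith
  refine ⟨fun x => ⟨hnn x, hle x⟩, ?_⟩
  have hsub : (DMfinsupp M).support ⊆ (M.map Prod.snd).toFinset := by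
    intro x hx
    have hx' : DM M x ≠ 0 := by
      rw [← hco x]
      exact Finsupp.mem_support_iff.mp hx
    by_contra hmem
    apply hx'
    have : M.filter (fun q => q.2 = x) = 0 := by
      rw [Multiset.filter_eq_nil]
      intro q hq hq2
      exact hmem (by simp [Multiset.mem_toFinset]; exact ⟨q.1, by rw [← hq2]; simpa using hq⟩)
    simp [DM, this]
  have hbig : ∑ x ∈ (M.map Prod.snd).toFinset, DMfinsupp M x = 1 := by
    simp only [hco]
    rw [sum_DM M _ (fun q hq => by simp [Multiset.mem_toFinset]; exact ⟨q.1, by simpa using hq⟩)]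
    exact h.2
  rw [Finset.sum_subset hsub (fun x _ hx => Finsupp.notMem_support_iff.mp hx), hbig]


/-- The probabilistic multiset functor `M₁`. -/
noncomputable def ProbMSetF : Type u ⥤ Type u where
  obj X := {M : Multiset (ℝ × X) // IsProbMultiset M}
  map f := TypeCat.ofHom fun M => ⟨M.1.map (fun q => (q.1, f q.2)), isProbMultiset_map f M.1 M.2⟩
  map_id := by
    intro X; ext M
    simp [types_id]
  map_comp := by
    intro X Y Z f g; ext M
    simp [types_comp, Multiset.map_map]

/-- The finitely supported probability distributions functor `D`, with the
pushforward as its action on maps. -/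
noncomputable def ProbDistF : Type u ⥤ Type u where
  obj X := {p : X →₀ ℝ // IsProbDist p}
  map f := TypeCat.ofHom fun p => ⟨Finsupp.mapDomain f p.1, isProbDist_mapDomain f p.1 p.2⟩
  map_id := by
    intro X; ext p
    simp [types_id, Finsupp.mapDomain_id]
  map_comp := by
    intro X Y Z f g; ext p
    simp [types_comp, Finsupp.mapDomain_comp]

/-- The natural transformation `δ : M₁ ⟶ D` whose components are induced by `D_M`. -/
noncomputable def deltaDM : ProbMSetF.{u} ⟶ ProbDistF.{u} where
  app X := TypeCat.ofHom fun M => ⟨DMfinsupp M.1, isProbDist_DMfinsupp M.1 M.2⟩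
  naturality := by
    intro X Y f
    ext M
    apply Subtype.ext
    exact (DMfinsupp_natural f M.1).symm
/-!
By naturality, `δ` maps a witness `w` of `Rel(M₁)_≡(R) u v` to a witness `δ w` of
`Rel(D)(R) (δ u) (δ v)`. Conversely, every distribution is the `δ`-image of the multiset listing
its support with the weights, so a witness of `Rel(D)(R) (δ u) (δ v)` lifts along `δ` to a witness
of `Rel(M₁)_≡(R) u v`. Hence the two liftings agree on coalgebras related by `δ`.
-/

theorem relLift_app_iff_relLiftOrd_kernelRel {F G : Type u ⥤ Type u} (δ : F ⟶ G)
    {X Y : Type u} (R : X → Y → Prop)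
    (hδ : Function.Surjective (δ.app {p : X × Y // R p.1 p.2})) (u : F.obj X) (v : F.obj Y) :
    RelLift G R (δ.app X u) (δ.app Y v) ↔ RelLiftOrd F (kernelRel δ) R u v := by
  constructor
  · rintro ⟨w, hw₁, hw₂⟩
    obtain ⟨w, rfl⟩ := hδ w
    refine ⟨w, ?_, ?_⟩
    · simp only [kernelRel, NatTrans.naturality_apply, hw₁]
    · simp only [kernelRel, NatTrans.naturality_apply, hw₂]
  · rintro ⟨w, hw₁, hw₂⟩
    refine ⟨δ.app _ w, ?_, ?_⟩
    · rw [← NatTrans.naturality_apply]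
      exact hw₁.symm
    · rw [← NatTrans.naturality_apply]
      exact hw₂

theorem isBisimulation_comp_iff_isSimulation_kernelRel {F G : Type u ⥤ Type u} (δ : F ⟶ G)
    (hδ : ∀ X, Function.Surjective (δ.app X)) {X₁ X₂ : Type u}
    (a₁ : X₁ → F.obj X₁) (a₂ : X₂ → F.obj X₂) (R : X₁ → X₂ → Prop) :
    IsBisimulation G (δ.app X₁ ∘ a₁) (δ.app X₂ ∘ a₂) R ↔ IsSimulation F (kernelRel δ) a₁ a₂ R :=
  forall₂_congr fun x y =>
    imp_congr_right fun _ => relLift_app_iff_relLiftOrd_kernelRel δ R (hδ _) (a₁ x) (a₂ y)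

noncomputable def Finsupp.toWeightedMultiset {X : Type u} (p : X →₀ ℝ) : Multiset (ℝ × X) :=
  p.support.val.map fun x => (p x, x)

theorem DM_toWeightedMultiset {X : Type u} (p : X →₀ ℝ) (y : X) :
    DM p.toWeightedMultiset y = p y := by
  have hsum : DM p.toWeightedMultiset y = ∑ x ∈ p.support with x = y, p x := by
    simp only [DM, Finsupp.toWeightedMultiset, Multiset.filter_map, Multiset.map_map]
    rfl
  rw [hsum, Finset.sum_filter, Finset.sum_ite_eq', ite_eq_left_iff]
  exact fun hy => (Finsupp.notMem_support_iff.mp hy).symm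

theorem DMfinsupp_toWeightedMultiset {X : Type u} (p : X →₀ ℝ) :
    DMfinsupp p.toWeightedMultiset = p :=
  Finsupp.ext (DM_toWeightedMultiset p)

theorem isProbMultiset_toWeightedMultiset {X : Type u} {p : X →₀ ℝ} (h : IsProbDist p) :
    IsProbMultiset p.toWeightedMultiset := by
  refine ⟨fun q hq => ?_, ?_⟩
  · obtain ⟨x, -, rfl⟩ := Multiset.mem_map.mp hq
    exact h.1 x
  · rw [Finsupp.toWeightedMultiset, Multiset.map_map]
    exact h.2

theorem deltaDM_app_surjective (X : Type u) : Function.Surjective (deltaDM.app X) := fun p =>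
  ⟨⟨p.1.toWeightedMultiset, isProbMultiset_toWeightedMultiset p.2⟩,
    Subtype.ext (DMfinsupp_toWeightedMultiset p.1)⟩

/-- probabilistic bisimulations are exactly `≡^δ`-simulations between
probabilistic multi-transition systems representing them. -/
theorem probDist_bisim_iff_probMSet_kernel_simulation {X₁ X₂ : Type u}
    (b₁ : X₁ → ProbDistF.obj X₁) (b₂ : X₂ → ProbDistF.obj X₂)
    (a₁ : X₁ → ProbMSetF.obj X₁) (a₂ : X₂ → ProbMSetF.obj X₂)
    (h₁ : deltaDM.app X₁ ∘ a₁ = b₁) (h₂ : deltaDM.app X₂ ∘ a₂ = b₂)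
    (R : X₁ → X₂ → Prop) :
    IsBisimulation ProbDistF b₁ b₂ R ↔
      IsSimulation ProbMSetF (kernelRel deltaDM) a₁ a₂ R := by
  subst h₁ h₂
  exact isBisimulation_comp_iff_isSimulation_kernelRel deltaDM deltaDM_app_surjective a₁ a₂ R
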